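/- arXiv:2407.20451 — 2 statements merged into one kernel-verified Lean document; each statement's English description precedes it below -/
import Mathlib

section
/- There exists a threshold C* ∈ (0, 1/2) such that: for 0 < C < C*, Ψ_C has exactly two fixed points in [0,1/2]; for C = C*, Ψ_C has exactly one fixed point in [0,1/2]; and for C* < C ≤ 1/2, Ψ_C has no fixed points in [0,1/2]. -/
/-!
Since `Φ ≤ 1/2 < 1` by convexity, writing `g r = (r - Φ r) / (1 - Φ r)` one has
`C + (1 - C) Φ r - r = (1 - Φ r) (C - g r)`: the fixed points of `Ψ_C` are the solutions of
`g r = C`, and `C* = max g`. On the other hand `r ↦ C + (1 - C) Φ r - r` is strictly convex,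
hence strictly monotone on either side of its minimum, and it is positive at both endpoints when
`C > 0`. So it has two zeros when its minimum is negative (`C < C*`), exactly one when its minimum
is `0` (`C = C*`), and none when it is positive (`C > C*`).
-/

open Set

section StrictConvex

variable {s : Set ℝ} {f : ℝ → ℝ}

theorem StrictConvexOn.lt_max_of_lt_of_lt (hf : StrictConvexOn ℝ s f) {x y z : ℝ} (hx : x ∈ s)
    (hz : z ∈ s) (hxy : x < y) (hyz : y < z) : f y < max (f x) (f z) :=
  hf.lt_on_openSegment hx hz (hxy.trans hyz).ne <| by
    rw [openSegment_eq_Ioo (hxy.trans hyz)]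
    exact ⟨hxy, hyz⟩

theorem StrictConvexOn.strictAntiOn_Iio_of_isMinOn (hf : StrictConvexOn ℝ s f) {p : ℝ}
    (hp : p ∈ s) (hmin : IsMinOn f s p) : StrictAntiOn f (s ∩ Iio p) := by
  intro u hu v hv huv
  calc f v < max (f u) (f p) := hf.lt_max_of_lt_of_lt hu.1 hp huv hv.2
    _ = f u := max_eq_left (hmin hu.1)

theorem StrictConvexOn.strictMonoOn_Ioi_of_isMinOn (hf : StrictConvexOn ℝ s f) {p : ℝ}
    (hp : p ∈ s) (hmin : IsMinOn f s p) : StrictMonoOn f (s ∩ Ioi p) := by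
  intro u hu v hv huv
  calc f u < max (f p) (f v) := hf.lt_max_of_lt_of_lt hp hv.1 hu.2 huv
    _ = f v := max_eq_right (hmin hv.1)

theorem StrictConvexOn.const_add_mul_sub (hf : StrictConvexOn ℝ s f) (a : ℝ) {c : ℝ}
    (hc : 0 < c) : StrictConvexOn ℝ s (fun x => a + c * f x - x) := by
  refine ⟨hf.1, fun x hx y hy hxy u v hu hv huv => ?_⟩
  have := hf.2 hx hy hxy hu hv huv
  simp only [smul_eq_mul] at this ⊢
  linear_combination c * this - a * huv

theorem StrictConvexOn.setOf_eq_zero_eq_singleton (hf : StrictConvexOn ℝ s f) {p : ℝ}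
    (hp : p ∈ s) (hmin : IsMinOn f s p) (hfp : f p = 0) : {x ∈ s | f x = 0} = {p} := by
  ext x
  refine ⟨fun ⟨hx, hfx⟩ => hf.eq_of_isMinOn ?_ hmin hx hp, fun hx => hx ▸ ⟨hp, hfp⟩⟩
  exact isMinOn_iff.2 fun y hy => (hfx.trans hfp.symm).trans_le (hmin hy)

theorem StrictConvexOn.encard_setOf_eq_zero_eq_two {a b p : ℝ}
    (hf : StrictConvexOn ℝ (Icc a b) f) (hfc : ContinuousOn f (Icc a b)) (ha : 0 < f a)
    (hb : 0 < f b) (hp : p ∈ Icc a b) (hfp : f p < 0) :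
    {x ∈ Icc a b | f x = 0}.encard = 2 := by
  obtain ⟨q, hq, hmin⟩ := isCompact_Icc.exists_isMinOn ⟨p, hp⟩ hfc
  have hfq : f q < 0 := (hmin hp).trans_lt hfp
  obtain ⟨x, hx, hfx⟩ : ∃ x ∈ Icc a q, f x = 0 :=
    intermediate_value_Icc' hq.1 (hfc.mono (Icc_subset_Icc_right hq.2)) ⟨hfq.le, ha.le⟩
  obtain ⟨y, hy, hfy⟩ : ∃ y ∈ Icc q b, f y = 0 :=
    intermediate_value_Icc hq.2 (hfc.mono (Icc_subset_Icc_left hq.1)) ⟨hfq.le, hb.le⟩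
  have hxq : x < q := hx.2.lt_of_ne (by rintro rfl; linarith)
  have hqy : q < y := hy.1.lt_of_ne (by rintro rfl; linarith)
  have hxs : x ∈ Icc a b := ⟨hx.1, hxq.le.trans hq.2⟩
  have hys : y ∈ Icc a b := ⟨hq.1.trans hqy.le, hy.2⟩
  suffices {x ∈ Icc a b | f x = 0} = {x, y} by rw [this, encard_pair (hxq.trans hqy).ne]
  ext z
  simp only [mem_ofPred_eq, mem_insert_iff, mem_singleton_iff]
  refine ⟨fun ⟨hz, hfz⟩ => ?_, by rintro (rfl | rfl) <;> exact ⟨‹_›, ‹_›⟩⟩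
  rcases lt_trichotomy z q with hzq | rfl | hqz
  · exact .inl <| (hf.strictAntiOn_Iio_of_isMinOn hq hmin).injOn ⟨hz, hzq⟩ ⟨hxs, hxq⟩
      (hfz.trans hfx.symm)
  · exact absurd hfz hfq.ne
  · exact .inr <| (hf.strictMonoOn_Ioi_of_isMinOn hq hmin).injOn ⟨hz, hqz⟩ ⟨hys, hqy⟩
      (hfz.trans hfy.symm)

end StrictConvex

section FixedPoints

variable {Φ : ℝ → ℝ}

theorem StrictConvexOn.lt_self_of_mem_Ioo {b : ℝ} (hΦ : StrictConvexOn ℝ (Icc 0 b) Φ)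
    (h0 : Φ 0 = 0) (hb : Φ b = b) {r : ℝ} (hr : r ∈ Ioo 0 b) : Φ r < r := by
  have hb0 : 0 < b := hr.1.trans hr.2
  have := hΦ.2 (left_mem_Icc.2 hb0.le) (right_mem_Icc.2 hb0.le) hb0.ne
    (sub_pos.2 ((div_lt_one hb0).2 hr.2)) (div_pos hr.1 hb0) (sub_add_cancel 1 (r / b))
  simp only [smul_eq_mul, h0, hb, mul_zero, zero_add] at this
  rwa [div_mul_cancel₀ r hb0.ne'] at this

noncomputable def fixedPointParam (Φ : ℝ → ℝ) (r : ℝ) : ℝ := (r - Φ r) / (1 - Φ r)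

theorem continuousOn_fixedPointParam {s : Set ℝ} (hcont : ContinuousOn Φ s)
    (hΦ : ∀ r ∈ s, Φ r < 1) : ContinuousOn (fixedPointParam Φ) s :=
  (continuousOn_id.sub hcont).div (continuousOn_const.sub hcont)
    fun r hr => (sub_pos.2 (hΦ r hr)).ne'

theorem const_add_mul_sub_eq_mul {r : ℝ} (hr : Φ r ≠ 1) (C : ℝ) :
    C + (1 - C) * Φ r - r = (1 - Φ r) * (C - fixedPointParam Φ r) := by
  have : 1 - Φ r ≠ 0 := sub_ne_zero.2 hr.symm
  unfold fixedPointParam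
  field_simp
  ring

theorem fixedPoint_iff {r : ℝ} (hr : Φ r ≠ 1) (C : ℝ) :
    C + (1 - C) * Φ r = r ↔ fixedPointParam Φ r = C := by
  rw [← sub_eq_zero, const_add_mul_sub_eq_mul hr, mul_eq_zero, sub_eq_zero, sub_eq_zero,
    or_iff_right (Ne.symm hr), eq_comm]

theorem setOf_fixedPoint_eq {s : Set ℝ} (C : ℝ) :
    {r ∈ s | C + (1 - C) * Φ r = r} = {r ∈ s | C + (1 - C) * Φ r - r = 0} := by
  simp only [sub_eq_zero]

theorem encard_setOf_fixedPoint_eq_two {a b r₀ C : ℝ} (hconv : StrictConvexOn ℝ (Icc a b) Φ)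
    (hcont : ContinuousOn Φ (Icc a b)) (hΦ : ∀ r ∈ Icc a b, Φ r < 1)
    (ha : fixedPointParam Φ a < C) (hb : fixedPointParam Φ b < C) (hr₀ : r₀ ∈ Icc a b)
    (hC : C < fixedPointParam Φ r₀) (hC1 : C < 1) :
    {r ∈ Icc a b | C + (1 - C) * Φ r = r}.encard = 2 := by
  have hab : a ≤ b := hr₀.1.trans hr₀.2
  have hgap : ∀ r ∈ Icc a b, C + (1 - C) * Φ r - r = (1 - Φ r) * (C - fixedPointParam Φ r) :=
    fun r hr => const_add_mul_sub_eq_mul (hΦ r hr).ne C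
  rw [setOf_fixedPoint_eq]
  refine (hconv.const_add_mul_sub C (sub_pos.2 hC1)).encard_setOf_eq_zero_eq_two (by fun_prop)
    ?_ ?_ hr₀ ?_
  · rw [hgap a (left_mem_Icc.2 hab)]
    exact mul_pos (sub_pos.2 (hΦ a (left_mem_Icc.2 hab))) (sub_pos.2 ha)
  · rw [hgap b (right_mem_Icc.2 hab)]
    exact mul_pos (sub_pos.2 (hΦ b (right_mem_Icc.2 hab))) (sub_pos.2 hb)
  · rw [hgap r₀ hr₀]
    exact mul_neg_of_pos_of_neg (sub_pos.2 (hΦ r₀ hr₀)) (sub_neg.2 hC)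

theorem setOf_fixedPoint_eq_singleton {s : Set ℝ} {r₀ : ℝ} (hconv : StrictConvexOn ℝ s Φ)
    (hΦ : ∀ r ∈ s, Φ r < 1) (hr₀ : r₀ ∈ s) (hmax : IsMaxOn (fixedPointParam Φ) s r₀)
    (hC1 : fixedPointParam Φ r₀ < 1) :
    {r ∈ s | fixedPointParam Φ r₀ + (1 - fixedPointParam Φ r₀) * Φ r = r} = {r₀} := by
  have hgap : ∀ r ∈ s, fixedPointParam Φ r₀ + (1 - fixedPointParam Φ r₀) * Φ r - r =
      (1 - Φ r) * (fixedPointParam Φ r₀ - fixedPointParam Φ r) :=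
    fun r hr => const_add_mul_sub_eq_mul (hΦ r hr).ne _
  rw [setOf_fixedPoint_eq]
  refine (hconv.const_add_mul_sub _ (sub_pos.2 hC1)).setOf_eq_zero_eq_singleton hr₀
    (isMinOn_iff.2 fun r hr => ?_) (by rw [hgap r₀ hr₀, sub_self, mul_zero])
  rw [hgap r hr, hgap r₀ hr₀, sub_self, mul_zero]
  exact mul_nonneg (sub_pos.2 (hΦ r hr)).le (sub_nonneg.2 (hmax hr))

theorem setOf_fixedPoint_eq_empty {s : Set ℝ} {C : ℝ} (hΦ : ∀ r ∈ s, Φ r < 1)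
    (hC : ∀ r ∈ s, fixedPointParam Φ r < C) : {r ∈ s | C + (1 - C) * Φ r = r} = ∅ :=
  eq_empty_of_forall_notMem fun r ⟨hr, hfix⟩ =>
    (hC r hr).ne ((fixedPoint_iff (hΦ r hr).ne C).1 hfix)

end FixedPoints

theorem saddle_node_bifurcation_general (Φ : ℝ → ℝ)
    (hC1 : ContDiffOn ℝ 1 Φ (Set.Icc 0 (1 / 2)))
    (h0 : Φ 0 = 0) (hhalf : Φ (1 / 2) = 1 / 2)
    (hpos : ∀ r ∈ Set.Ioc (0 : ℝ) (1 / 2), 0 < Φ r)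
    (hdmono : StrictMonoOn (deriv Φ) (Set.Ioc (0 : ℝ) (1 / 2))) :
    ∃ Cstar ∈ Set.Ioo (0 : ℝ) (1 / 2),
      (∀ C : ℝ, 0 < C → C < Cstar →
        Set.encard {r ∈ Set.Icc (0 : ℝ) (1 / 2) | C + (1 - C) * Φ r = r} = 2) ∧
      Set.encard {r ∈ Set.Icc (0 : ℝ) (1 / 2) | Cstar + (1 - Cstar) * Φ r = r} = 1 ∧
      (∀ C : ℝ, Cstar < C → C ≤ 1 / 2 →
        Set.encard {r ∈ Set.Icc (0 : ℝ) (1 / 2) | C + (1 - C) * Φ r = r} = 0) := by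
  have hcont : ContinuousOn Φ (Icc 0 (1 / 2)) := hC1.continuousOn
  have hconv : StrictConvexOn ℝ (Icc 0 (1 / 2)) Φ :=
    (hdmono.mono (by rw [interior_Icc]; exact Ioo_subset_Ioc_self)).strictConvexOn_of_deriv
      (convex_Icc 0 (1 / 2)) hcont
  have hΦ : ∀ r ∈ Icc (0 : ℝ) (1 / 2), Φ r < 1 := fun r hr => by
    have := hconv.convexOn.le_on_segment (left_mem_Icc.2 (by norm_num))
      (right_mem_Icc.2 (by norm_num)) (by rwa [segment_eq_Icc (by norm_num)])
    rw [h0, hhalf, max_eq_right (by norm_num)] at this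
    linarith
  have hg_quarter : 0 < fixedPointParam Φ (1 / 4) :=
    div_pos (sub_pos.2 (hconv.lt_self_of_mem_Ioo h0 hhalf (by norm_num)))
      (sub_pos.2 (hΦ _ (by norm_num)))
  have hg0 : fixedPointParam Φ 0 = 0 := by rw [fixedPointParam, h0, sub_self, zero_div]
  have hghalf : fixedPointParam Φ (1 / 2) = 0 := by rw [fixedPointParam, hhalf, sub_self, zero_div]
  obtain ⟨r₀, hr₀, hmax⟩ := isCompact_Icc.exists_isMaxOn (nonempty_Icc.2 (by norm_num))
    (continuousOn_fixedPointParam hcont hΦ)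
  have hCstar : fixedPointParam Φ r₀ < 1 / 2 := by
    rw [fixedPointParam, div_lt_iff₀ (sub_pos.2 (hΦ r₀ hr₀))]
    rcases hr₀.1.eq_or_lt with rfl | hr₀pos
    · norm_num [h0]
    · linarith [hpos r₀ ⟨hr₀pos, hr₀.2⟩, hr₀.2]
  refine ⟨fixedPointParam Φ r₀, ⟨hg_quarter.trans_le (hmax (by norm_num)), hCstar⟩,
    fun C hC0 hC => ?_, ?_, fun C hC _ => ?_⟩
  · exact encard_setOf_fixedPoint_eq_two hconv hcont hΦ (by rwa [hg0]) (by rwa [hghalf]) hr₀ hC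
      (by linarith)
  · rw [setOf_fixedPoint_eq_singleton hconv hΦ hr₀ hmax (by linarith), encard_singleton]
  · rw [setOf_fixedPoint_eq_empty hΦ fun r hr => (hmax hr).trans_lt hC, encard_empty]

theorem saddle_node_bifurcation (Φ : ℝ → ℝ)
    (hC1 : ContDiffOn ℝ 1 Φ (Set.Icc 0 (1 / 2)))
    (h0 : Φ 0 = 0) (hhalf : Φ (1 / 2) = 1 / 2)
    (hpos : ∀ r ∈ Set.Ioc (0 : ℝ) (1 / 2), 0 < Φ r)
    (hmono : StrictMonoOn Φ (Set.Ioc (0 : ℝ) (1 / 2)))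
    (hdpos : ∀ r ∈ Set.Ioc (0 : ℝ) (1 / 2), 0 < deriv Φ r)
    (hdmono : StrictMonoOn (deriv Φ) (Set.Ioc (0 : ℝ) (1 / 2))) :
    ∃ Cstar ∈ Set.Ioo (0 : ℝ) (1 / 2),
      (∀ C : ℝ, 0 < C → C < Cstar →
        Set.encard {r ∈ Set.Icc (0 : ℝ) (1 / 2) | C + (1 - C) * Φ r = r} = 2) ∧
      Set.encard {r ∈ Set.Icc (0 : ℝ) (1 / 2) | Cstar + (1 - Cstar) * Φ r = r} = 1 ∧
      (∀ C : ℝ, Cstar < C → C ≤ 1 / 2 →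
        Set.encard {r ∈ Set.Icc (0 : ℝ) (1 / 2) | C + (1 - C) * Φ r = r} = 0) :=
  saddle_node_bifurcation_general Φ hC1 h0 hhalf hpos hdmono
end

section
/- For the M=3 case with committed fraction C, the fixed points of Ψ_C(r) = C + (1−C)(3r^2 − 2r^3) in [0,1/2] undergo a saddle-node bifurcation: there exists C* ∈ (0,1/2) such that the equation C + (1−C)(3r^2 − 2r^3) = r has two solutions in [0,1/2] for 0 < C < C*, one solution for C = C*, and no solutions for C* < C ≤ 1/2. -/
/-!
Since `Ψ_C(r) - r = (1 - r) ((1 - C)(4r - 1)² - (1 - 9C)) / 8` and `1 - r > 0` on `[0, 1/2]`,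
the fixed points of `Ψ_C` in `[0, 1/2]` are the `r` with `(4r - 1)² = (1 - 9C)/(1 - C)`.
As `r` runs over `[0, 1/2]`, `4r - 1` runs over `[-1, 1]`, and the right-hand side lies in
`(0, 1]`, is `0` or is negative according as `C < 1/9`, `C = 1/9` or `C > 1/9`. So `C* = 1/9`.
-/

open Set

theorem psi_sub_self_eq (C r : ℝ) :
    C + (1 - C) * (3 * r ^ 2 - 2 * r ^ 3) - r =
      (1 - r) * ((1 - C) * (4 * r - 1) ^ 2 - (1 - 9 * C)) / 8 := by
  ring

theorem fixedPoints_eq_setOf_sq_eq {C : ℝ} (hC : C < 1) :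
    {r ∈ Icc (0 : ℝ) (1 / 2) | C + (1 - C) * (3 * r ^ 2 - 2 * r ^ 3) = r} =
      {r ∈ Icc (0 : ℝ) (1 / 2) | (4 * r - 1) ^ 2 = (1 - 9 * C) / (1 - C)} := by
  ext r
  simp only [mem_sep_iff, and_congr_right_iff]
  intro hr
  have hr1 : 1 - r ≠ 0 := by linarith [hr.2]
  rw [← sub_eq_zero, psi_sub_self_eq, div_eq_zero_iff, mul_eq_zero, eq_div_iff (by linarith)]
  simp only [hr1, false_or, OfNat.ofNat_ne_zero, or_false]
  constructor <;> intro h <;> linarith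

theorem setOf_sq_eq_of_nonneg {d : ℝ} (hd0 : 0 ≤ d) (hd1 : d ≤ 1) :
    {r ∈ Icc (0 : ℝ) (1 / 2) | (4 * r - 1) ^ 2 = d} = {(1 - √d) / 4, (1 + √d) / 4} := by
  have hs1 : √d ≤ 1 := Real.sqrt_le_one.mpr hd1
  have hs0 : 0 ≤ √d := Real.sqrt_nonneg d
  ext r
  have hsq : (4 * r - 1) ^ 2 = d ↔ 4 * r - 1 = √d ∨ 4 * r - 1 = -√d := by
    rw [← sq_eq_sq_iff_eq_or_eq_neg, Real.sq_sqrt hd0]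
  rw [mem_sep_iff, mem_Icc, hsq, mem_insert_iff, mem_singleton_iff]
  constructor
  · rintro ⟨-, h | h⟩
    · right; linarith
    · left; linarith
  · rintro (rfl | rfl)
    · exact ⟨⟨by linarith, by linarith⟩, Or.inr (by ring)⟩
    · exact ⟨⟨by linarith, by linarith⟩, Or.inl (by ring)⟩

theorem encard_setOf_sq_eq_of_pos {d : ℝ} (hd0 : 0 < d) (hd1 : d ≤ 1) :
    {r ∈ Icc (0 : ℝ) (1 / 2) | (4 * r - 1) ^ 2 = d}.encard = 2 := by
  rw [setOf_sq_eq_of_nonneg hd0.le hd1, encard_pair]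
  have := Real.sqrt_pos.mpr hd0
  intro h
  linarith

theorem setOf_sq_eq_zero : {r ∈ Icc (0 : ℝ) (1 / 2) | (4 * r - 1) ^ 2 = 0} = {1 / 4} := by
  rw [setOf_sq_eq_of_nonneg le_rfl zero_le_one, Real.sqrt_zero]
  norm_num

theorem setOf_sq_eq_of_neg {d : ℝ} (hd : d < 0) :
    {r ∈ Icc (0 : ℝ) (1 / 2) | (4 * r - 1) ^ 2 = d} = ∅ :=
  eq_empty_of_forall_notMem fun r hr => (sq_nonneg (4 * r - 1)).not_gt (hr.2 ▸ hd)

theorem saddle_node_M3 :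
    ∃ Cstar ∈ Set.Ioo (0 : ℝ) (1 / 2),
      (∀ C : ℝ, 0 < C → C < Cstar →
        Set.encard {r ∈ Set.Icc (0 : ℝ) (1 / 2) |
          C + (1 - C) * (3 * r ^ 2 - 2 * r ^ 3) = r} = 2) ∧
      Set.encard {r ∈ Set.Icc (0 : ℝ) (1 / 2) |
        Cstar + (1 - Cstar) * (3 * r ^ 2 - 2 * r ^ 3) = r} = 1 ∧
      (∀ C : ℝ, Cstar < C → C ≤ 1 / 2 →
        Set.encard {r ∈ Set.Icc (0 : ℝ) (1 / 2) |
          C + (1 - C) * (3 * r ^ 2 - 2 * r ^ 3) = r} = 0) := by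
  refine ⟨1 / 9, by norm_num, fun C hC0 hC1 => ?_, ?_, fun C hC1 hC2 => ?_⟩
  · rw [fixedPoints_eq_setOf_sq_eq (by linarith)]
    exact encard_setOf_sq_eq_of_pos (div_pos (by linarith) (by linarith))
      ((div_le_one (by linarith)).mpr (by linarith))
  · rw [fixedPoints_eq_setOf_sq_eq (by norm_num)]
    rw [show (1 - 9 * (1 / 9) : ℝ) / (1 - 1 / 9) = 0 by norm_num, setOf_sq_eq_zero,
      encard_singleton]
  · rw [fixedPoints_eq_setOf_sq_eq (by linarith), encard_eq_zero]
    exact setOf_sq_eq_of_neg (div_neg_of_neg_of_pos (by linarith) (by linarith))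
end
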